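/- arXiv:1408.4908 — 4 statements merged into one kernel-verified Lean document; each statement's English description precedes it below -/
import Mathlib

section
/- Let X be a random variable on k states with probabilities p_x, let α_x be real numbers with ∑_x |α_x| = δ and p_x + α_x ≥ 0, and define X' with probabilities (p_x + α_x)/(1 + ∑_x α_x). If δ ≤ 1/3, then |H(X') − H(X)| ≤ 2·H_b(2δ) + 3δ log k. -/
open Real Finset

/-- Shannon entropy of a finitely supported distribution. -/
noncomputable def Hfin {α : Type*} [Fintype α] (p : α → ℝ) : ℝ := ∑ i, Real.negMulLog (p i)

/-- Discrete mutual information of a joint distribution on a finite grid: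
`I(X,Y) = H(X) + H(Y) - H(X,Y)`. -/
noncomputable def MIfin {α β : Type*} [Fintype α] [Fintype β] (p : α × β → ℝ) : ℝ :=
  Hfin (fun a => ∑ b, p (a, b)) + Hfin (fun b => ∑ a, p (a, b)) - Hfin p

/-! With `η = negMulLog`, renormalising moves `p` by at most `2δ / (1 - δ) ≤ 3δ` in `ℓ¹`.
The termwise bound `|η a - η b| ≤ η |a - b| + |a - b|` on `[0, 1]`, followed by Jensen for the
concave `η` applied to `∑ η |q x - p x|`, gives `|H q - H p| ≤ η T + T + T log k` where
`T = ∑ |q x - p x|`; this is monotone in `T ≤ 1`. It remains to check the scalar inequality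
`η (3δ) + 3δ ≤ 2 H_b(2δ)` for `δ ≤ 1/3`. -/

namespace Real

lemma negMulLog_add_le {a b : ℝ} (ha : 0 ≤ a) (hb : 0 ≤ b) :
    negMulLog (a + b) ≤ negMulLog a + negMulLog b := by
  rcases ha.eq_or_lt with rfl | ha
  · simp
  rcases hb.eq_or_lt with rfl | hb
  · simp
  have hla : log a ≤ log (a + b) := log_le_log ha (by linarith)
  have hlb : log b ≤ log (a + b) := log_le_log hb (by linarith)
  simp only [negMulLog, neg_mul]
  nlinarith [mul_le_mul_of_nonneg_left hla ha.le, mul_le_mul_of_nonneg_left hlb hb.le]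

lemma negMulLog_le_negMulLog_add_add {a e : ℝ} (ha : 0 ≤ a) (he : 0 ≤ e) (hae : a + e ≤ 1) :
    negMulLog a ≤ negMulLog (a + e) + e := by
  rcases ha.eq_or_lt with rfl | ha
  · simp only [negMulLog_zero, zero_add]
    linarith [negMulLog_nonneg he (by linarith)]
  have hlog : log (a + e) - log a ≤ e / a := by
    rw [← log_div (by linarith) ha.ne']
    linarith [log_le_sub_one_of_pos (show 0 < (a + e) / a by positivity),
      show (a + e) / a - 1 = e / a by field_simp; ring]
  have hmul : a * (log (a + e) - log a) ≤ e := by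
    simpa [mul_div_cancel₀ e ha.ne'] using mul_le_mul_of_nonneg_left hlog ha.le
  have hnonpos : e * log (a + e) ≤ 0 :=
    mul_nonpos_of_nonneg_of_nonpos he (log_nonpos (by linarith) hae)
  simp only [negMulLog, neg_mul]
  nlinarith

lemma abs_negMulLog_sub_le {a b : ℝ} (ha0 : 0 ≤ a) (hb0 : 0 ≤ b) (ha1 : a ≤ 1) (hb1 : b ≤ 1) :
    |negMulLog a - negMulLog b| ≤ negMulLog |a - b| + |a - b| := by
  wlog hab : a ≤ b generalizing a b
  · rw [abs_sub_comm, abs_sub_comm a b]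
    exact this hb0 ha0 hb1 ha1 (not_le.mp hab).le
  obtain ⟨e, he, rfl⟩ : ∃ e, 0 ≤ e ∧ b = a + e := ⟨b - a, by linarith, by ring⟩
  rw [show |a - (a + e)| = e by rw [abs_sub_comm, add_sub_cancel_left, abs_of_nonneg he], abs_le]
  have hsub := negMulLog_add_le ha0 he
  have hle := negMulLog_le_negMulLog_add_add ha0 he hb1
  have hnonneg := negMulLog_nonneg he (by linarith)
  constructor <;> linarith

lemma negMulLog_add_self_monotoneOn : MonotoneOn (fun t ↦ negMulLog t + t) (Set.Icc 0 1) := by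
  intro s hs t ht hst
  obtain ⟨e, he, rfl⟩ : ∃ e, 0 ≤ e ∧ t = s + e := ⟨t - s, by linarith, by ring⟩
  linarith [negMulLog_le_negMulLog_add_add hs.1 he ht.2]

lemma sum_negMulLog_le {ι : Type*} [Fintype ι] {e : ι → ℝ} (he : ∀ i, 0 ≤ e i) :
    ∑ i, negMulLog (e i) ≤ negMulLog (∑ i, e i) + (∑ i, e i) * log (Fintype.card ι) := by
  rcases isEmpty_or_nonempty ι with hι | hι
  · simp
  have hk : (0 : ℝ) < Fintype.card ι := by exact_mod_cast Fintype.card_pos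
  have hjensen := concaveOn_negMulLog.le_map_sum (t := univ) (w := fun _ ↦ (Fintype.card ι : ℝ)⁻¹)
    (p := e) (fun _ _ ↦ by positivity) (by simp [hk.ne']) (fun i _ ↦ Set.mem_Ici.mpr (he i))
  have hinv : negMulLog (Fintype.card ι : ℝ)⁻¹ = (Fintype.card ι : ℝ)⁻¹ * log (Fintype.card ι) := by
    simp [negMulLog, log_inv]
  simp only [smul_eq_mul, ← mul_sum, negMulLog_mul, hinv] at hjensen
  have := mul_le_mul_of_nonneg_left hjensen hk.le
  field_simp at this
  linarith

end Real

lemma abs_Hfin_sub_le {ι : Type*} [Fintype ι] {p q : ι → ℝ} {t : ℝ}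
    (hp0 : ∀ i, 0 ≤ p i) (hp1 : ∀ i, p i ≤ 1) (hq0 : ∀ i, 0 ≤ q i) (hq1 : ∀ i, q i ≤ 1)
    (ht : ∑ i, |q i - p i| ≤ t) (ht1 : t ≤ 1) :
    |Hfin q - Hfin p| ≤ negMulLog t + t + t * log (Fintype.card ι) := by
  set T := ∑ i, |q i - p i|
  have hT0 : 0 ≤ T := sum_nonneg fun i _ ↦ abs_nonneg _
  calc |Hfin q - Hfin p|
      ≤ ∑ i, (negMulLog |q i - p i| + |q i - p i|) := by
        rw [Hfin, Hfin, ← sum_sub_distrib]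
        exact (abs_sum_le_sum_abs _ _).trans
          (sum_le_sum fun i _ ↦ abs_negMulLog_sub_le (hq0 i) (hp0 i) (hq1 i) (hp1 i))
    _ ≤ negMulLog T + T + T * log (Fintype.card ι) := by
        rw [sum_add_distrib]
        linarith [sum_negMulLog_le fun i ↦ abs_nonneg (q i - p i)]
    _ ≤ negMulLog t + t + t * log (Fintype.card ι) := by
        have := negMulLog_add_self_monotoneOn ⟨hT0, ht.trans ht1⟩ ⟨hT0.trans ht, ht1⟩ ht
        nlinarith [log_natCast_nonneg (Fintype.card ι)]

lemma le_one_of_sum_eq_one {ι : Type*} [Fintype ι] {p : ι → ℝ} (hp0 : ∀ i, 0 ≤ p i)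
    (hpsum : ∑ i, p i = 1) (i : ι) : p i ≤ 1 :=
  hpsum ▸ single_le_sum (fun j _ ↦ hp0 j) (mem_univ i)

lemma sum_abs_div_one_add_sum_sub_le {ι : Type*} [Fintype ι] {p α : ι → ℝ} {δ : ℝ}
    (hp0 : ∀ i, 0 ≤ p i) (hpsum : ∑ i, p i = 1) (hδ : ∑ i, |α i| ≤ δ) (hδ1 : δ < 1) :
    ∑ i, |(p i + α i) / (1 + ∑ j, α j) - p i| ≤ 2 * δ / (1 - δ) := by
  set s := ∑ j, α j
  have hs : |s| ≤ δ := (abs_sum_le_sum_abs _ _).trans hδ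
  have hs1 : 1 - δ ≤ 1 + s := by linarith [neg_abs_le s]
  have hs0 : 0 < 1 + s := by linarith
  have hterm : ∀ i, |(p i + α i) / (1 + s) - p i| ≤ (|α i| + δ * p i) / (1 - δ) := fun i ↦ calc
    |(p i + α i) / (1 + s) - p i| = |(α i - s * p i) / (1 + s)| := by
      congr 1
      field_simp
      ring
    _ = |α i - s * p i| / (1 + s) := by rw [abs_div, abs_of_pos hs0]
    _ ≤ (|α i| + δ * p i) / (1 - δ) := by
      gcongr ?_ / ?_
      · exact add_nonneg (abs_nonneg _) (mul_nonneg ((abs_nonneg s).trans hs) (hp0 i))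
      · calc |α i - s * p i| ≤ |α i| + |s| * p i := by
              simpa [abs_mul, abs_of_nonneg (hp0 i)] using abs_sub (α i) (s * p i)
          _ ≤ |α i| + δ * p i := by gcongr; exact hp0 i
  calc ∑ i, |(p i + α i) / (1 + s) - p i| ≤ ∑ i, (|α i| + δ * p i) / (1 - δ) :=
        sum_le_sum fun i _ ↦ hterm i
    _ ≤ 2 * δ / (1 - δ) := by
        rw [← sum_div, sum_add_distrib, ← mul_sum, hpsum]
        gcongr
        linarith

lemma add_sq_div_two_le_neg_log_one_sub {x : ℝ} (hx0 : 0 ≤ x) (hx1 : x < 1) :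
    x + x ^ 2 / 2 ≤ -log (1 - x) := by
  have hseries := hasSum_pow_div_log_of_abs_lt_one (by rwa [abs_of_nonneg hx0])
  have := sum_le_hasSum (range 2) (fun n _ ↦ by positivity) hseries
  norm_num [sum_range_succ] at this
  linarith

lemma negMulLog_three_mul_add_le_two_mul_binEntropy {δ : ℝ} (hδ0 : 0 ≤ δ) (hδ3 : δ ≤ 1 / 3) :
    negMulLog (3 * δ) + 3 * δ ≤ 2 * binEntropy (2 * δ) := by
  rcases hδ0.eq_or_lt with rfl | hδ0
  · simp
  have hlog2 : log (2 * δ) = log 2 + log δ := log_mul (by norm_num) hδ0.ne'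
  have hlog3 : log (3 * δ) = log 3 + log δ := log_mul (by norm_num) hδ0.ne'
  have hlogδ : log δ ≤ -log 3 := by
    simpa [log_inv] using log_le_log hδ0 (by linarith : δ ≤ (3 : ℝ)⁻¹)
  have hlog32 : 1 / 3 ≤ log 3 - log 2 := by
    rw [← log_div (by norm_num) (by norm_num)]
    linarith [one_sub_inv_le_log_of_pos (by norm_num : (0 : ℝ) < 3 / 2)]
  -- the linear bound `x ≤ -log (1 - x)` is too weak near `δ = 1/3`
  have hlog1 := mul_le_mul_of_nonneg_left
    (add_sq_div_two_le_neg_log_one_sub (x := 2 * δ) (by linarith) (by linarith))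
    (by linarith : 0 ≤ 1 - 2 * δ)
  rw [binEntropy_eq_negMulLog_add_negMulLog_one_sub]
  simp only [negMulLog, neg_mul, hlog2, hlog3]
  nlinarith [mul_le_mul_of_nonneg_left hlogδ hδ0.le, mul_le_mul_of_nonneg_left hlog32 hδ0.le]

/-- Perturbing a distribution on `k` states by `α` with `∑|α| = δ ≤ 1/3` and renormalizing
changes entropy by at most `2 H_b(2δ) + 3δ log k`. -/
theorem stmt3 (k : ℕ) (p α : Fin k → ℝ) (δ : ℝ)
    (hp0 : ∀ x, 0 ≤ p x) (hpsum : ∑ x, p x = 1)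
    (hpα : ∀ x, 0 ≤ p x + α x) (hδ : ∑ x, |α x| = δ) (hδ3 : δ ≤ 1/3) :
    |Hfin (fun x => (p x + α x) / (1 + ∑ y, α y)) - Hfin p|
      ≤ 2 * Real.binEntropy (2 * δ) + 3 * δ * Real.log k := by
  have hδ0 : 0 ≤ δ := hδ ▸ sum_nonneg fun x _ ↦ abs_nonneg _
  have hs : 0 < 1 + ∑ y, α y := by
    linarith [neg_abs_le (∑ y, α y), hδ ▸ abs_sum_le_sum_abs α univ]
  set q := fun x ↦ (p x + α x) / (1 + ∑ y, α y)
  have hq0 : ∀ x, 0 ≤ q x := fun x ↦ div_nonneg (hpα x) hs.le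
  have hqsum : ∑ x, q x = 1 := by
    simp only [q, ← sum_div, sum_add_distrib, hpsum]
    exact div_self hs.ne'
  have hT : ∑ x, |q x - p x| ≤ 3 * δ := by
    refine (sum_abs_div_one_add_sum_sub_le hp0 hpsum hδ.le (by linarith)).trans ?_
    rw [div_le_iff₀ (by linarith)]
    nlinarith
  have hH := abs_Hfin_sub_le hp0 (le_one_of_sum_eq_one hp0 hpsum) hq0
    (le_one_of_sum_eq_one hq0 hqsum) hT (by linarith)
  rw [Fintype.card_fin] at hH
  linarith [negMulLog_three_mul_add_le_two_mul_binEntropy hδ0 hδ3]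
end

section
/- Let (X,Y) and (X',Y') be two jointly distributed random variables on a k-by-ℓ grid of states with k ≤ ℓ, whose joint distributions differ by moving at most δ probability mass (i.e., total variation distance at most δ), with 0 < δ ≤ 1/4. Then |I(X,Y) − I(X',Y')| ≤ 4·H_b(2δ) + 7δ log k. -/
/-!
Write `η = negMulLog`, `ρ(a, b) = η a + η b - η (a + b) = (a + b) H_b(a / (a + b))`, and for a
nonnegative vector `v` of mass `|v|` let `g v = |v| H(v / |v|)`. Jensen for the concave `H_b`
gives `∑ ρ(uᵢ, vᵢ) ≤ ρ(|u|, |v|)`, hence `g u + g v ≤ g (u + v) ≤ g u + g v + ρ(|u|, |v|)`.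
Both terms of `I = g(p_X) - |p| H(X | Y)` inherit these bounds, and lie in `[0, |p| log k]`.
With `d = (q - p)⁺` and `d' = (q - p)⁻`, both of mass `t = ∑ |p - q| / 2 ≤ δ`, each such term
`F` satisfies `F p ≤ F (p + d) = F (q + d') ≤ F q + F d' + ρ(1, t) ≤ F q + t log k + ρ(1, t)`,
and `ρ(1, t) = (1 + t) H_b(t / (1 + t)) ≤ 2 H_b(2δ)`.
-/

open Real Finset

noncomputable def mixEntropy (a b : ℝ) : ℝ := negMulLog a + negMulLog b - negMulLog (a + b)

theorem mixEntropy_comm (a b : ℝ) : mixEntropy a b = mixEntropy b a := by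
  simp only [mixEntropy, add_comm]

theorem mixEntropy_eq_mul_binEntropy (a b : ℝ) :
    mixEntropy a b = (a + b) * binEntropy (a / (a + b)) := by
  rcases eq_or_ne (a + b) 0 with hab | hab
  · obtain rfl : b = -a := by linarith
    simp [mixEntropy, negMulLog, log_neg_eq_log]
  · have ha : negMulLog a =
        a / (a + b) * negMulLog (a + b) + (a + b) * negMulLog (a / (a + b)) := by
      rw [← negMulLog_mul, mul_div_cancel₀ a hab]
    have hb : negMulLog b =
        b / (a + b) * negMulLog (a + b) + (a + b) * negMulLog (b / (a + b)) := by
      rw [← negMulLog_mul, mul_div_cancel₀ b hab]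
    have hsum : a / (a + b) + b / (a + b) = 1 := by rw [← add_div, div_self hab]
    rw [binEntropy_eq_negMulLog_add_negMulLog_one_sub, ← hsum, add_sub_cancel_left, mixEntropy,
      ha, hb]
    linear_combination negMulLog (a + b) * hsum

theorem mixEntropy_nonneg {a b : ℝ} (ha : 0 ≤ a) (hb : 0 ≤ b) : 0 ≤ mixEntropy a b := by
  rw [mixEntropy_eq_mul_binEntropy]
  have hab : 0 ≤ a + b := add_nonneg ha hb
  exact mul_nonneg hab
    (binEntropy_nonneg (div_nonneg ha hab) (div_le_one_of_le₀ (le_add_of_nonneg_right hb) hab))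

theorem mixEntropy_one_le_mul_binEntropy {t s : ℝ} (ht : 0 ≤ t) (hts : t ≤ s) (hs : s ≤ 1 / 2) :
    mixEntropy 1 t ≤ (1 + t) * binEntropy s := by
  rw [mixEntropy_comm, mixEntropy_eq_mul_binEntropy, add_comm t]
  have hfrac : t / (1 + t) ≤ t := div_le_self ht (by linarith)
  gcongr
  exact binEntropy_strictMonoOn.monotoneOn ⟨by positivity, by linarith⟩
    ⟨by linarith, by linarith⟩ (hfrac.trans hts)

section Finite

variable {ι : Type*} [Fintype ι]

theorem sum_mixEntropy_le {u v : ι → ℝ} (hu : 0 ≤ u) (hv : 0 ≤ v) :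
    ∑ i, mixEntropy (u i) (v i) ≤ mixEntropy (∑ i, u i) (∑ i, v i) := by
  simp only [mixEntropy_eq_mul_binEntropy, ← sum_add_distrib]
  have hs : ∀ i, 0 ≤ u i + v i := fun i => add_nonneg (hu i) (hv i)
  rcases (sum_nonneg fun i _ => hs i).eq_or_lt with hS | hS
  · rw [← hS, zero_mul]
    refine le_of_eq (sum_eq_zero fun i _ => ?_)
    rw [(sum_eq_zero_iff_of_nonneg fun i _ => hs i).1 hS.symm i (mem_univ i), zero_mul]
  set S := ∑ i, (u i + v i)
  have hS0 : S ≠ 0 := hS.ne'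
  have jensen := strictConcave_binEntropy.concaveOn.le_map_sum (t := univ)
    (w := fun i => (u i + v i) / S) (p := fun i => u i / (u i + v i))
    (fun i _ => div_nonneg (hs i) hS.le) (by rw [← sum_div, div_self hS0]) fun i _ =>
      ⟨div_nonneg (hu i) (hs i), div_le_one_of_le₀ (le_add_of_nonneg_right (hv i)) (hs i)⟩
  have hmean : ∑ i, (u i + v i) / S * (u i / (u i + v i)) = (∑ i, u i) / S := by
    rw [sum_div]
    refine sum_congr rfl fun i _ => ?_
    rcases eq_or_ne (u i + v i) 0 with h | h
    · have hui : u i = 0 := le_antisymm (h ▸ le_add_of_nonneg_right (hv i)) (hu i)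
      simp [hui]
    · field_simp
  simp only [smul_eq_mul, hmean] at jensen
  calc ∑ i, (u i + v i) * binEntropy (u i / (u i + v i))
      = S * ∑ i, (u i + v i) / S * binEntropy (u i / (u i + v i)) := by
        rw [mul_sum]; exact sum_congr rfl fun i _ => by field_simp
    _ ≤ S * binEntropy ((∑ i, u i) / S) := by gcongr

-- `(∑ i, v i) * H(v / ∑ i, v i)`: the entropy of the normalisation of `v`, times its mass.
noncomputable def scaledEntropy (v : ι → ℝ) : ℝ := Hfin v - negMulLog (∑ i, v i)

theorem scaledEntropy_add (u v : ι → ℝ) :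
    scaledEntropy (u + v) = scaledEntropy u + scaledEntropy v
      + mixEntropy (∑ i, u i) (∑ i, v i) - ∑ i, mixEntropy (u i) (v i) := by
  simp only [scaledEntropy, Hfin, mixEntropy, Pi.add_apply, sum_add_distrib, sum_sub_distrib]
  ring

theorem scaledEntropy_add_scaledEntropy_le {u v : ι → ℝ} (hu : 0 ≤ u) (hv : 0 ≤ v) :
    scaledEntropy u + scaledEntropy v ≤ scaledEntropy (u + v) := by
  linarith [scaledEntropy_add u v, sum_mixEntropy_le hu hv]

theorem scaledEntropy_add_le {u v : ι → ℝ} (hu : 0 ≤ u) (hv : 0 ≤ v) :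
    scaledEntropy (u + v) ≤
      scaledEntropy u + scaledEntropy v + mixEntropy (∑ i, u i) (∑ i, v i) := by
  linarith [scaledEntropy_add u v,
    sum_nonneg fun i (_ : i ∈ univ) => mixEntropy_nonneg (hu i) (hv i)]

theorem scaledEntropy_nonneg {v : ι → ℝ} (hv : 0 ≤ v) : 0 ≤ scaledEntropy v := by
  rw [scaledEntropy, Hfin, sub_nonneg, negMulLog, neg_mul, sum_mul, ← sum_neg_distrib]
  refine sum_le_sum fun i _ => ?_
  rcases (hv i).eq_or_lt with h | h
  · simp [← h]
  · rw [negMulLog, neg_mul, neg_le_neg_iff]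
    exact mul_le_mul_of_nonneg_left
      (log_le_log h (single_le_sum (fun j _ => hv j) (mem_univ i))) h.le

theorem scaledEntropy_le_mul_log_card {v : ι → ℝ} (hv : 0 ≤ v) :
    scaledEntropy v ≤ (∑ i, v i) * log (Fintype.card ι) := by
  rcases isEmpty_or_nonempty ι with hι | hι
  · simp [scaledEntropy, Hfin]
  set n : ℝ := (Fintype.card ι : ℝ)
  have hn : 0 < n := by positivity
  have jensen := concaveOn_negMulLog.le_map_sum (t := univ) (w := fun _ => n⁻¹) (p := v)
    (fun _ _ => by positivity) (by simp [n]) fun i _ => Set.mem_Ici.2 (hv i)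
  have hη : negMulLog n⁻¹ = n⁻¹ * log n := by simp [negMulLog, log_inv]
  simp only [smul_eq_mul, ← mul_sum] at jensen
  rw [negMulLog_mul, hη] at jensen
  rw [scaledEntropy, Hfin, ← mul_le_mul_iff_of_pos_left (inv_pos.2 hn)]
  linarith

theorem sub_le_of_add_eq_add {F : (ι → ℝ) → ℝ}
    (hsuper : ∀ u v : ι → ℝ, 0 ≤ u → 0 ≤ v → F u + F v ≤ F (u + v))
    (hmix : ∀ u v : ι → ℝ, 0 ≤ u → 0 ≤ v →
      F (u + v) ≤ F u + F v + mixEntropy (∑ i, u i) (∑ i, v i))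
    (hnonneg : ∀ v : ι → ℝ, 0 ≤ v → 0 ≤ F v)
    {p q d d' : ι → ℝ} (hp : 0 ≤ p) (hq : 0 ≤ q) (hd : 0 ≤ d) (hd' : 0 ≤ d')
    (h : p + d = q + d') :
    F p - F q ≤ F d' + mixEntropy (∑ i, q i) (∑ i, d' i) := by
  have hpd := hsuper p d hp hd
  rw [h] at hpd
  linarith [hmix q d' hq hd', hnonneg d hd]

end Finite

section Joint

variable {α β : Type*} [Fintype β]

noncomputable def fstMarginal (p : α × β → ℝ) : α → ℝ := fun a => ∑ b, p (a, b)

theorem fstMarginal_add (u v : α × β → ℝ) : fstMarginal (u + v) = fstMarginal u + fstMarginal v :=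
  funext fun _ => sum_add_distrib

theorem fstMarginal_nonneg {p : α × β → ℝ} (hp : 0 ≤ p) : 0 ≤ fstMarginal p :=
  fun _ => sum_nonneg fun _ _ => hp _

variable [Fintype α]

theorem sum_fstMarginal (p : α × β → ℝ) : ∑ a, fstMarginal p a = ∑ z, p z :=
  (Fintype.sum_prod_type p).symm

noncomputable def fstEntropy (p : α × β → ℝ) : ℝ := scaledEntropy (fstMarginal p)

theorem fstEntropy_add_fstEntropy_le {u v : α × β → ℝ} (hu : 0 ≤ u) (hv : 0 ≤ v) :
    fstEntropy u + fstEntropy v ≤ fstEntropy (u + v) := by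
  rw [fstEntropy, fstEntropy, fstEntropy, fstMarginal_add]
  exact scaledEntropy_add_scaledEntropy_le (fstMarginal_nonneg hu) (fstMarginal_nonneg hv)

theorem fstEntropy_add_le {u v : α × β → ℝ} (hu : 0 ≤ u) (hv : 0 ≤ v) :
    fstEntropy (u + v) ≤ fstEntropy u + fstEntropy v + mixEntropy (∑ z, u z) (∑ z, v z) := by
  rw [fstEntropy, fstEntropy, fstEntropy, fstMarginal_add, ← sum_fstMarginal u,
    ← sum_fstMarginal v]
  exact scaledEntropy_add_le (fstMarginal_nonneg hu) (fstMarginal_nonneg hv)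

theorem fstEntropy_nonneg {p : α × β → ℝ} (hp : 0 ≤ p) : 0 ≤ fstEntropy p :=
  scaledEntropy_nonneg (fstMarginal_nonneg hp)

theorem fstEntropy_le_mul_log_card {p : α × β → ℝ} (hp : 0 ≤ p) :
    fstEntropy p ≤ (∑ z, p z) * log (Fintype.card α) := by
  rw [← sum_fstMarginal]
  exact scaledEntropy_le_mul_log_card (fstMarginal_nonneg hp)

-- the mass of `p` times the conditional entropy `H(X | Y)`
noncomputable def condEntropy (p : α × β → ℝ) : ℝ := ∑ b, scaledEntropy fun a => p (a, b)

theorem condEntropy_eq (p : α × β → ℝ) :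
    condEntropy p = Hfin p - Hfin fun b => ∑ a, p (a, b) := by
  simp only [condEntropy, scaledEntropy, Hfin, sum_sub_distrib, Fintype.sum_prod_type_right]

theorem condEntropy_add_condEntropy_le {u v : α × β → ℝ} (hu : 0 ≤ u) (hv : 0 ≤ v) :
    condEntropy u + condEntropy v ≤ condEntropy (u + v) := by
  rw [condEntropy, condEntropy, condEntropy, ← sum_add_distrib]
  exact sum_le_sum fun b _ => scaledEntropy_add_scaledEntropy_le (fun a => hu (a, b))
    (fun a => hv (a, b))

theorem condEntropy_add_le {u v : α × β → ℝ} (hu : 0 ≤ u) (hv : 0 ≤ v) :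
    condEntropy (u + v) ≤ condEntropy u + condEntropy v + mixEntropy (∑ z, u z) (∑ z, v z) := by
  have hcols := sum_mixEntropy_le (u := fun b => ∑ a, u (a, b)) (v := fun b => ∑ a, v (a, b))
    (fun b => sum_nonneg fun a _ => hu (a, b)) (fun b => sum_nonneg fun a _ => hv (a, b))
  rw [condEntropy, condEntropy, condEntropy, Fintype.sum_prod_type_right u,
    Fintype.sum_prod_type_right v, ← sum_add_distrib]
  calc ∑ b, scaledEntropy (fun a => (u + v) (a, b))
      ≤ ∑ b, (scaledEntropy (fun a => u (a, b)) + scaledEntropy (fun a => v (a, b))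
          + mixEntropy (∑ a, u (a, b)) (∑ a, v (a, b))) :=
        sum_le_sum fun b _ => scaledEntropy_add_le (fun a => hu (a, b)) (fun a => hv (a, b))
    _ ≤ _ := by rw [sum_add_distrib]; gcongr

theorem condEntropy_nonneg {p : α × β → ℝ} (hp : 0 ≤ p) : 0 ≤ condEntropy p :=
  sum_nonneg fun b _ => scaledEntropy_nonneg fun a => hp (a, b)

theorem condEntropy_le_mul_log_card {p : α × β → ℝ} (hp : 0 ≤ p) :
    condEntropy p ≤ (∑ z, p z) * log (Fintype.card α) := by
  rw [condEntropy, Fintype.sum_prod_type_right, sum_mul]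
  exact sum_le_sum fun b _ => scaledEntropy_le_mul_log_card fun a => hp (a, b)

theorem MIfin_eq_fstEntropy_sub_condEntropy {p : α × β → ℝ} (hp : ∑ z, p z = 1) :
    MIfin p = fstEntropy p - condEntropy p := by
  rw [condEntropy_eq, MIfin, fstEntropy, scaledEntropy, sum_fstMarginal, hp, negMulLog_one]
  unfold fstMarginal
  ring

theorem MIfin_sub_MIfin_le {p q : α × β → ℝ} (hp : 0 ≤ p) (hq : 0 ≤ q)
    (hp1 : ∑ z, p z = 1) (hq1 : ∑ z, q z = 1) {t : ℝ} (ht : ∑ z, |p z - q z| = 2 * t) :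
    MIfin p - MIfin q ≤ 2 * (t * log (Fintype.card α) + mixEntropy 1 t) := by
  set d := (q - p)⁺
  set d' := (q - p)⁻
  have hd : 0 ≤ d := posPart_nonneg _
  have hd' : 0 ≤ d' := negPart_nonneg _
  have hsplit : p + d = q + d' := by linear_combination posPart_sub_negPart (q - p)
  have hmass : ∑ z, d z = t ∧ ∑ z, d' z = t := by
    have hsum : ∑ z, p z + ∑ z, d z = ∑ z, q z + ∑ z, d' z := by
      simp only [← sum_add_distrib, ← Pi.add_apply, hsplit]
    have habs : ∑ z, d z + ∑ z, d' z = 2 * t := by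
      rw [← sum_add_distrib, ← ht]
      exact sum_congr rfl fun z _ => by rw [abs_sub_comm]; exact posPart_add_negPart (q z - p z)
    constructor <;> linarith
  have hfst := sub_le_of_add_eq_add (fun _ _ => fstEntropy_add_fstEntropy_le)
    (fun _ _ => fstEntropy_add_le) (fun _ => fstEntropy_nonneg) hp hq hd hd' hsplit
  have hcond := sub_le_of_add_eq_add (fun _ _ => condEntropy_add_condEntropy_le)
    (fun _ _ => condEntropy_add_le) (fun _ => condEntropy_nonneg) hq hp hd' hd hsplit.symm
  rw [hq1, hmass.2] at hfst
  rw [hp1, hmass.1] at hcond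
  have hfst' : fstEntropy d' ≤ t * log (Fintype.card α) :=
    hmass.2 ▸ fstEntropy_le_mul_log_card hd'
  have hcond' : condEntropy d ≤ t * log (Fintype.card α) :=
    hmass.1 ▸ condEntropy_le_mul_log_card hd
  rw [MIfin_eq_fstEntropy_sub_condEntropy hp1, MIfin_eq_fstEntropy_sub_condEntropy hq1]
  linarith

end Joint

theorem stmt4_general (k l : ℕ) (p q : Fin k × Fin l → ℝ)
    (hp0 : ∀ z, 0 ≤ p z) (hpsum : ∑ z, p z = 1)
    (hq0 : ∀ z, 0 ≤ q z) (hqsum : ∑ z, q z = 1)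
    (δ : ℝ) (hδ4 : δ ≤ 1/4) (htv : ∑ z, |p z - q z| ≤ 2 * δ) :
    |MIfin p - MIfin q| ≤ 4 * Real.binEntropy (2 * δ) + 7 * δ * Real.log k := by
  obtain ⟨t, htv_eq⟩ : ∃ t, ∑ z, |p z - q z| = 2 * t :=
    ⟨_, (mul_div_cancel₀ _ two_ne_zero).symm⟩
  have ht : 0 ≤ t := by linarith [sum_nonneg fun z (_ : z ∈ univ) => abs_nonneg (p z - q z)]
  have hpq := MIfin_sub_MIfin_le hp0 hq0 hpsum hqsum htv_eq
  have hqp := MIfin_sub_MIfin_le hq0 hp0 hqsum hpsum (t := t) <| by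
    rw [← htv_eq]; exact sum_congr rfl fun z _ => abs_sub_comm _ _
  rw [Fintype.card_fin] at hpq hqp
  have hmix := mixEntropy_one_le_mul_binEntropy ht (by linarith : t ≤ 2 * δ) (by linarith)
  have hH : 0 ≤ binEntropy (2 * δ) := binEntropy_nonneg (by linarith) (by linarith)
  have hlog := log_natCast_nonneg k
  have hlogt : t * log k ≤ δ * log k := mul_le_mul_of_nonneg_right (by linarith) hlog
  have hmixt : (1 + t) * binEntropy (2 * δ) ≤ 2 * binEntropy (2 * δ) :=
    mul_le_mul_of_nonneg_right (by linarith) hH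
  have hlogδ : 0 ≤ δ * log k := mul_nonneg (by linarith) hlog
  rw [abs_sub_le_iff]
  constructor <;> linarith

/-- If two joint distributions on a `k`-by-`ℓ` grid (with `k ≤ ℓ`) differ by moving at most
`δ ≤ 1/4` probability mass (i.e. `∑|p−q| ≤ 2δ`), then their mutual informations differ by at
most `4 H_b(2δ) + 7δ log k`. -/
theorem stmt4 (k l : ℕ) (hkl : k ≤ l) (p q : Fin k × Fin l → ℝ)
    (hp0 : ∀ z, 0 ≤ p z) (hpsum : ∑ z, p z = 1)
    (hq0 : ∀ z, 0 ≤ q z) (hqsum : ∑ z, q z = 1)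
    (δ : ℝ) (hδ0 : 0 < δ) (hδ4 : δ ≤ 1/4) (htv : ∑ z, |p z - q z| ≤ 2 * δ) :
    |MIfin p - MIfin q| ≤ 4 * Real.binEntropy (2 * δ) + 7 * δ * Real.log k :=
  stmt4_general k l p q hp0 hpsum hq0 hqsum δ hδ4 htv
end

section
/- Let G' be a finite grid and G the grid obtained by merging two adjacent columns of G'. Let Z' = (X',Y') be a random variable on the cells of G' and Z = (X,Y) the induced variable on the cells of G. Then |I(Z') − I(Z)| ≤ π · H_b(ν/π), where ν is the probability mass of one of the two merged columns and π = Pr[X lies in the merged column]. -/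
/-!
Merging atoms of masses `x` and `y` lowers entropy by `mergeEntropyLoss x y =
η x + η y - η (x + y)` (`η = negMulLog`), which equals `(x + y) H_b (x / (x + y))`. Merging the
two columns leaves `H(Y)` unchanged, lowers `H(X)` by the loss of the two column masses, and lowers
`H(X, Y)` by the sum over rows of the losses of the two merged cells. Hence `I(Z') - I(Z)` is the
column loss minus the sum of the cell losses. Both are nonnegative, and the sum is at most the
column loss because `mergeEntropyLoss`, the perspective of the concave function `H_b`, is
superadditive on nonnegative arguments.
-/

open Real Finset

noncomputable def mergeEntropyLoss (x y : ℝ) : ℝ :=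
  negMulLog x + negMulLog y - negMulLog (x + y)

theorem mergeEntropyLoss_eq_mul_binEntropy (x y : ℝ) :
    mergeEntropyLoss x y = (x + y) * binEntropy (x / (x + y)) := by
  rcases eq_or_ne (x + y) 0 with hs | hs
  · obtain rfl : y = -x := by linarith
    simp [mergeEntropyLoss, negMulLog]
  · have hx : negMulLog x
        = x / (x + y) * negMulLog (x + y) + (x + y) * negMulLog (x / (x + y)) := by
      rw [← negMulLog_mul, mul_div_cancel₀ _ hs]
    have hy : negMulLog y
        = (1 - x / (x + y)) * negMulLog (x + y) + (x + y) * negMulLog (1 - x / (x + y)) := by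
      rw [← negMulLog_mul]
      congr 1
      field_simp
      ring
    rw [mergeEntropyLoss, hx, hy, binEntropy_eq_negMulLog_add_negMulLog_one_sub]
    ring

theorem mergeEntropyLoss_nonneg {x y : ℝ} (hx : 0 ≤ x) (hy : 0 ≤ y) :
    0 ≤ mergeEntropyLoss x y := by
  rw [mergeEntropyLoss_eq_mul_binEntropy]
  rcases (add_nonneg hx hy).eq_or_lt with hs | hs
  · simp [← hs]
  · exact mul_nonneg hs.le (binEntropy_nonneg (by positivity) ((div_le_one hs).2 (by linarith)))

theorem mergeEntropyLoss_add_le {a b c d : ℝ} (ha : 0 ≤ a) (hb : 0 ≤ b) (hc : 0 ≤ c)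
    (hd : 0 ≤ d) :
    mergeEntropyLoss a b + mergeEntropyLoss c d ≤ mergeEntropyLoss (a + c) (b + d) := by
  rcases (add_nonneg ha hb).eq_or_lt with hs | hs
  · obtain ⟨rfl, rfl⟩ : a = 0 ∧ b = 0 := ⟨by linarith, by linarith⟩
    simp [mergeEntropyLoss]
  rcases (add_nonneg hc hd).eq_or_lt with ht | ht
  · obtain ⟨rfl, rfl⟩ : c = 0 ∧ d = 0 := ⟨by linarith, by linarith⟩
    simp [mergeEntropyLoss]
  have hst : 0 < a + b + (c + d) := by positivity
  have hmem : ∀ {x y : ℝ}, 0 ≤ x → 0 ≤ y → x / (x + y) ∈ Set.Icc (0 : ℝ) 1 := fun hx hy =>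
    ⟨by positivity, div_le_one_of_le₀ (by linarith) (by positivity)⟩
  have hconc := strictConcave_binEntropy.concaveOn.2 (hmem ha hb) (hmem hc hd)
    (div_nonneg hs.le hst.le) (div_nonneg ht.le hst.le) (by field_simp)
  have harg : ((a + b) / (a + b + (c + d))) • (a / (a + b))
      + ((c + d) / (a + b + (c + d))) • (c / (c + d)) = (a + c) / (a + b + (c + d)) := by
    have := hs.ne'
    have := ht.ne'
    simp only [smul_eq_mul]
    field_simp
  rw [harg, smul_eq_mul, smul_eq_mul] at hconc
  simp only [mergeEntropyLoss_eq_mul_binEntropy]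
  calc (a + b) * binEntropy (a / (a + b)) + (c + d) * binEntropy (c / (c + d))
      = (a + b + (c + d)) * ((a + b) / (a + b + (c + d)) * binEntropy (a / (a + b))
          + (c + d) / (a + b + (c + d)) * binEntropy (c / (c + d))) := by field_simp
    _ ≤ (a + c + (b + d)) * binEntropy ((a + c) / (a + c + (b + d))) := by
      rw [show a + c + (b + d) = a + b + (c + d) by ring]
      exact mul_le_mul_of_nonneg_left hconc hst.le

theorem sum_mergeEntropyLoss_le {ι : Type*} (s : Finset ι) {f g : ι → ℝ}
    (hf : ∀ i ∈ s, 0 ≤ f i) (hg : ∀ i ∈ s, 0 ≤ g i) :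
    ∑ i ∈ s, mergeEntropyLoss (f i) (g i) ≤ mergeEntropyLoss (∑ i ∈ s, f i) (∑ i ∈ s, g i) := by
  classical
  induction s using Finset.induction with
  | empty => simp [mergeEntropyLoss]
  | insert a s ha ih =>
    simp only [Finset.forall_mem_insert] at hf hg
    simp only [Finset.sum_insert ha]
    calc mergeEntropyLoss (f a) (g a) + ∑ i ∈ s, mergeEntropyLoss (f i) (g i)
        ≤ mergeEntropyLoss (f a) (g a) + mergeEntropyLoss (∑ i ∈ s, f i) (∑ i ∈ s, g i) := by
          gcongr
          exact ih hf.2 hg.2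
      _ ≤ _ := mergeEntropyLoss_add_le hf.1 hg.1 (sum_nonneg hf.2) (sum_nonneg hg.2)

namespace Fin

variable {M : Type*} [AddCommMonoid M] {k : ℕ}

/-- `c.predAbove` sends both `c.castSucc` and `c.succ` to `c` and is injective elsewhere, so this
adds up the entries `c.castSucc` and `c.succ` of `u` and keeps the others. -/
def mergeAdj (c : Fin k) (u : Fin (k + 1) → M) (a : Fin k) : M :=
  ∑ i, if c.predAbove i = a then u i else 0

theorem mergeAdj_apply (c : Fin k) (u : Fin (k + 1) → M) (a : Fin k) :
    mergeAdj c u a = (if a = c then u c.castSucc else 0) + u (c.castSucc.succAbove a) := by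
  rw [mergeAdj, sum_univ_succAbove _ c.castSucc]
  simp only [predAbove_castSucc_self, predAbove_succAbove, sum_ite_eq', mem_univ, if_true]
  simp only [eq_comm]

theorem sum_mergeAdj (c : Fin k) (u : Fin (k + 1) → M) : ∑ a, mergeAdj c u a = ∑ i, u i := by
  simp only [mergeAdj]
  rw [Finset.sum_comm]
  simp

theorem mergeAdj_sum {ι : Type*} (s : Finset ι) (c : Fin k) (u : ι → Fin (k + 1) → M)
    (a : Fin k) : mergeAdj c (fun i => ∑ j ∈ s, u j i) a = ∑ j ∈ s, mergeAdj c (u j) a := by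
  simp only [mergeAdj]
  rw [Finset.sum_comm]
  simp only [sum_ite_irrel, sum_const_zero]

theorem sum_comp_sub_sum_comp_mergeAdj {G : Type*} [AddCommGroup G] (h : M → G) (c : Fin k)
    (u : Fin (k + 1) → M) :
    ∑ i, h (u i) - ∑ a, h (mergeAdj c u a)
      = h (u c.castSucc) + h (u c.succ) - h (u c.castSucc + u c.succ) := by
  rw [sum_univ_succAbove _ c.castSucc, add_sub_assoc, ← Finset.sum_sub_distrib,
    Finset.sum_eq_single c]
  · simp only [succAbove_castSucc_self, mergeAdj_apply, if_true]
    abel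
  · intro a _ ha
    simp [mergeAdj_apply, ha]
  · simp

end Fin

open Fin in
theorem MIfin_sub_MIfin_mergeAdj {k : ℕ} {β : Type*} [Fintype β] (c : Fin k)
    (p : Fin (k + 1) × β → ℝ) :
    MIfin p - MIfin (fun z : Fin k × β => mergeAdj c (fun i => p (i, z.2)) z.1)
      = mergeEntropyLoss (∑ j, p (c.castSucc, j)) (∑ j, p (c.succ, j))
        - ∑ j, mergeEntropyLoss (p (c.castSucc, j)) (p (c.succ, j)) := by
  have hX : (fun a => ∑ j, mergeAdj c (fun i => p (i, j)) a)
      = mergeAdj c (fun i => ∑ j, p (i, j)) :=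
    funext fun a => (mergeAdj_sum _ c _ a).symm
  have hY : (fun j => ∑ a, mergeAdj c (fun i => p (i, j)) a) = fun j => ∑ i, p (i, j) :=
    funext fun j => sum_mergeAdj c _
  have hXloss := sum_comp_sub_sum_comp_mergeAdj negMulLog c (fun i => ∑ j, p (i, j))
  have hXYloss : Hfin p - Hfin (fun z : Fin k × β => mergeAdj c (fun i => p (i, z.2)) z.1)
      = ∑ j, mergeEntropyLoss (p (c.castSucc, j)) (p (c.succ, j)) := by
    simp only [Hfin]
    rw [Fintype.sum_prod_type_right, Fintype.sum_prod_type_right, ← Finset.sum_sub_distrib]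
    exact sum_congr rfl fun j _ => sum_comp_sub_sum_comp_mergeAdj negMulLog c _
  simp only [MIfin, hX, hY]
  simp only [Hfin, mergeEntropyLoss] at hXloss hXYloss ⊢
  linarith

theorem stmt5_general (k l : ℕ) (c : Fin k) (p : Fin (k + 1) × Fin l → ℝ)
    (hp0 : ∀ z, 0 ≤ p z) :
    |MIfin p -
        MIfin (fun z : Fin k × Fin l =>
          ∑ i : Fin (k + 1), if c.predAbove i = z.1 then p (i, z.2) else 0)|
      ≤ (∑ j, p (c.castSucc, j) + ∑ j, p (c.succ, j)) *
          Real.binEntropy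
            ((∑ j, p (c.castSucc, j)) /
              (∑ j, p (c.castSucc, j) + ∑ j, p (c.succ, j))) := by
  have hcols : 0 ≤ mergeEntropyLoss (∑ j, p (c.castSucc, j)) (∑ j, p (c.succ, j)) :=
    mergeEntropyLoss_nonneg (sum_nonneg fun j _ => hp0 _) (sum_nonneg fun j _ => hp0 _)
  have hcells : 0 ≤ ∑ j, mergeEntropyLoss (p (c.castSucc, j)) (p (c.succ, j)) :=
    sum_nonneg fun j _ => mergeEntropyLoss_nonneg (hp0 _) (hp0 _)
  have hcells_le := sum_mergeEntropyLoss_le univ (fun j _ => hp0 (c.castSucc, j))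
    (fun j _ => hp0 (c.succ, j))
  rw [← mergeEntropyLoss_eq_mul_binEntropy]
  exact MIfin_sub_MIfin_mergeAdj c p ▸
    abs_sub_le_of_nonneg_of_le hcols le_rfl hcells hcells_le

/-- Merging the two adjacent columns `c.castSucc` and `c.succ` of a joint distribution on
`(k+1)` columns and `l` rows changes the mutual information by at most `π H_b(ν/π)`, where
`ν` is the mass of one merged column and `π` the mass of the merged column. -/
theorem stmt5 (k l : ℕ) (c : Fin k) (p : Fin (k + 1) × Fin l → ℝ)
    (hp0 : ∀ z, 0 ≤ p z) (hpsum : ∑ z, p z = 1) :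
    |MIfin p -
        MIfin (fun z : Fin k × Fin l =>
          ∑ i : Fin (k + 1), if c.predAbove i = z.1 then p (i, z.2) else 0)|
      ≤ (∑ j, p (c.castSucc, j) + ∑ j, p (c.succ, j)) *
          Real.binEntropy
            ((∑ j, p (c.castSucc, j)) /
              (∑ j, p (c.castSucc, j) + ∑ j, p (c.succ, j))) :=
  stmt5_general k l c p hp0
end

section
/- Let Π and Ψ be random variables over a finite set Γ with distributions (π_i) and (ψ_i), let f : Γ → S be a function to a set of size B, and set P = f(Π), Q = f(Ψ). Define ε_i = (ψ_i − π_i)/π_i. Then for every 0 < a < 1 there is a constant A > 0 such that |H(Q) − H(P)| ≤ (log B) · A · ∑_i |ε_i| whenever |ε_i| ≤ 1 − a for all i. -/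
open Real Finset

lemma abs_log_le_aux (a z : ℝ) (ha0 : 0 < a) (ha1 : a ≤ 1) (hz : a ≤ z) :
    |Real.log z| ≤ |z - 1| / a := by
  have hz0 : 0 < z := lt_of_lt_of_le ha0 hz
  rcases le_or_gt 1 z with h | h
  · have h1 : Real.log z ≤ z - 1 := by
      have := Real.log_le_sub_one_of_pos hz0; linarith
    have h2 : |Real.log z| = Real.log z := abs_of_nonneg (Real.log_nonneg h)
    have h3 : |z - 1| = z - 1 := abs_of_nonneg (by linarith)
    rw [h2, h3]
    calc Real.log z ≤ z - 1 := h1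
      _ ≤ (z - 1) / a := by rw [le_div_iff₀ ha0]; nlinarith
  · have h1 : Real.log z⁻¹ ≤ z⁻¹ - 1 := by
      have := Real.log_le_sub_one_of_pos (inv_pos.mpr hz0); linarith
    rw [Real.log_inv] at h1
    have h2 : |Real.log z| = -Real.log z := abs_of_nonpos (Real.log_nonpos (le_of_lt hz0) (le_of_lt h))
    have h3 : |z - 1| = 1 - z := by rw [abs_of_nonpos (by linarith)]; ring
    rw [h2, h3]
    have : z⁻¹ - 1 = (1 - z) / z := by field_simp
    rw [this] at h1
    calc -Real.log z ≤ (1 - z) / z := h1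
      _ ≤ (1 - z) / a := by
        apply div_le_div_of_nonneg_left (by linarith) ha0 hz

lemma mul_abs_log_le_one (x : ℝ) (hx0 : 0 < x) (hx1 : x ≤ 1) : x * |Real.log x| ≤ 1 := by
  have h1 : Real.log x⁻¹ ≤ x⁻¹ - 1 := by
    have := Real.log_le_sub_one_of_pos (inv_pos.mpr hx0); linarith
  rw [Real.log_inv] at h1
  have h2 : |Real.log x| = -Real.log x := abs_of_nonpos (Real.log_nonpos (le_of_lt hx0) hx1)
  rw [h2]
  have : x * (x⁻¹ - 1) = 1 - x := by field_simp
  nlinarith [mul_le_mul_of_nonneg_left h1 (le_of_lt hx0)]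

lemma anal (a x y e : ℝ) (ha0 : 0 < a) (ha1 : a ≤ 1) (hx : 0 < x)
    (he : |y - x| ≤ e) (hex : e ≤ (1 - a) * x) :
    |Real.negMulLog y - Real.negMulLog x| ≤ e * |Real.log x| + (2 / a) * e := by
  have he0 : 0 ≤ e := le_trans (abs_nonneg _) he
  have hyx1 : x - e ≤ y := by have := abs_le.mp he; linarith
  have hyx2 : y ≤ x + e := by have := abs_le.mp he; linarith
  have hy0 : 0 < y := by nlinarith
  have hy2 : y ≤ 2 * x := by nlinarith
  have key : Real.negMulLog y - Real.negMulLog x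
      = -((y - x) * Real.log x) - y * Real.log (y / x) := by
    rw [Real.negMulLog, Real.negMulLog, Real.log_div (ne_of_gt hy0) (ne_of_gt hx)]
    ring
  rw [key]
  have hz : a ≤ y / x := by
    rw [le_div_iff₀ hx]; nlinarith
  have hlog : |Real.log (y / x)| ≤ |y / x - 1| / a := abs_log_le_aux a _ ha0 ha1 hz
  have habs : |y / x - 1| = |y - x| / x := by
    rw [show y / x - 1 = (y - x) / x by field_simp, abs_div, abs_of_pos hx]
  calc |(-((y - x) * Real.log x) - y * Real.log (y / x))|
      ≤ |(y - x) * Real.log x| + |y * Real.log (y / x)| := by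
        rw [sub_eq_add_neg]
        refine le_trans (abs_add_le _ _) ?_
        simp [abs_neg]
    _ = |y - x| * |Real.log x| + y * |Real.log (y / x)| := by
        rw [abs_mul, abs_mul, abs_of_pos hy0]
    _ ≤ e * |Real.log x| + y * (|y - x| / x / a) := by
        rw [habs] at hlog
        have h1 : |y - x| * |Real.log x| ≤ e * |Real.log x| :=
          mul_le_mul_of_nonneg_right he (abs_nonneg _)
        have h2 : y * |Real.log (y / x)| ≤ y * (|y - x| / x / a) :=
          mul_le_mul_of_nonneg_left hlog (le_of_lt hy0)
        linarith
    _ ≤ e * |Real.log x| + (2 / a) * e := by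
        have : y * (|y - x| / x / a) ≤ (2 / a) * e := by
          rw [div_div]
          have h1 : y * (|y - x| / (x * a)) ≤ 2 * x * (e / (x * a)) := by
            gcongr
          have h2 : 2 * x * (e / (x * a)) = (2 / a) * e := by field_simp
          linarith
        linarith

lemma mul_abs_log_le_one' (u v : ℝ) (hu : 0 < u) (huv : u ≤ v) (hv : v ≤ 1) :
    u * |Real.log v| ≤ 1 := by
  have hv0 : 0 < v := lt_of_lt_of_le hu huv
  have hu1 : u ≤ 1 := le_trans huv hv
  have h : |Real.log v| ≤ |Real.log u| := by
    rw [abs_of_nonpos (Real.log_nonpos hv0.le hv),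
        abs_of_nonpos (Real.log_nonpos hu.le hu1)]
    exact neg_le_neg (Real.log_le_log hu huv)
  calc u * |Real.log v| ≤ u * |Real.log u| := by gcongr
    _ ≤ 1 := mul_abs_log_le_one u hu hu1

/-- For every `0 < a < 1` there is a constant `A > 0` (depending only on `a`) such that for
any distributions `π, ψ` on a finite set `Γ` and any map `f : Γ → S` into a set of size `B`,
if the relative errors `ε_i = (ψ_i − π_i)/π_i` satisfy `|ε_i| ≤ 1 − a`, then the entropies of
the pushforward distributions `P = f(Π)`, `Q = f(Ψ)` satisfy
`|H(Q) − H(P)| ≤ (log B) · A · ∑ |ε_i|`. -/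
theorem stmt18 (a : ℝ) (ha0 : 0 < a) (ha1 : a < 1) :
    ∃ A : ℝ, 0 < A ∧
      ∀ (Γ S : Type) [Fintype Γ] [Fintype S] [DecidableEq S] (f : Γ → S) (pi psi : Γ → ℝ),
        (∀ i, 0 < pi i) → (∑ i, pi i) = 1 → (∀ i, 0 ≤ psi i) → (∑ i, psi i) = 1 →
        (∀ i, |(psi i - pi i) / pi i| ≤ 1 - a) →
        |Hfin (fun s => ∑ i ∈ Finset.univ.filter (fun i => f i = s), psi i) -
            Hfin (fun s => ∑ i ∈ Finset.univ.filter (fun i => f i = s), pi i)|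
          ≤ Real.log (Fintype.card S) * A * ∑ i, |(psi i - pi i) / pi i| := by
  have hlog2 : 0 < Real.log 2 := Real.log_pos (by norm_num)
  refine ⟨(1 + 2 / a) / Real.log 2, by positivity, ?_⟩
  intro Γ S _ _ _ f pi psi hpi hpis hpsi hpsis heps
  set A : ℝ := (1 + 2 / a) / Real.log 2 with hA
  set eps : Γ → ℝ := fun i => |(psi i - pi i) / pi i| with heps_def
  have heps0 : ∀ i, 0 ≤ eps i := fun i => abs_nonneg _
  set T : S → Finset Γ := fun s => Finset.univ.filter (fun i => f i = s) with hT
  set P : S → ℝ := fun s => ∑ i ∈ T s, pi i with hPdef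
  set Q : S → ℝ := fun s => ∑ i ∈ T s, psi i with hQdef
  have habs_sub : ∀ i, |psi i - pi i| = eps i * pi i := by
    intro i
    show |psi i - pi i| = |(psi i - pi i) / pi i| * pi i
    rw [abs_div, abs_of_pos (hpi i), div_mul_cancel₀ _ (ne_of_gt (hpi i))]
  rcases le_or_gt (Fintype.card S) 1 with hcard | hcard
  · -- trivial case: at most one outcome
    have hsub : Subsingleton S := Fintype.card_le_one_iff_subsingleton.mp hcard
    have hH0 : ∀ q : Γ → ℝ, (∑ i, q i) = 1 →
        Hfin (fun s => ∑ i ∈ Finset.univ.filter (fun i => f i = s), q i) = 0 := by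
      intro q hq
      unfold Hfin
      apply Finset.sum_eq_zero
      intro s _
      have hfil : Finset.univ.filter (fun i => f i = s) = (Finset.univ : Finset Γ) :=
        Finset.filter_true_of_mem (fun i _ => Subsingleton.elim _ _)
      simp [hfil, hq]
    have hlog0 : Real.log (Fintype.card S) = 0 := by
      rcases Nat.le_one_iff_eq_zero_or_eq_one.mp hcard with h | h <;> simp [h]
    rw [hH0 psi hpsis, hH0 pi hpis, hlog0]
    simp
  · -- main case: card S ≥ 2
    have hcard2 : (2 : ℝ) ≤ (Fintype.card S : ℝ) := by exact_mod_cast hcard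
    have hlogB : Real.log 2 ≤ Real.log (Fintype.card S) :=
      Real.log_le_log (by norm_num) hcard2
    have hP1 : ∀ s, P s ≤ 1 := by
      intro s
      rw [hPdef, ← hpis]
      exact Finset.sum_le_sum_of_subset_of_nonneg (Finset.subset_univ _)
        (fun i _ _ => (hpi i).le)
    have hfiber : ∀ s, |Real.negMulLog (Q s) - Real.negMulLog (P s)| ≤
        ∑ i ∈ T s, eps i * (pi i * |Real.log (P s)| + (2 / a) * pi i) := by
      intro s
      rcases Finset.eq_empty_or_nonempty (T s) with he | hne
      · simp [hPdef, hQdef, he]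
      · have hPpos : 0 < P s := Finset.sum_pos (fun i _ => hpi i) hne
        set e : ℝ := ∑ i ∈ T s, eps i * pi i with hedef
        have hQP : |Q s - P s| ≤ e := by
          rw [hQdef, hPdef, ← Finset.sum_sub_distrib]
          refine le_trans (Finset.abs_sum_le_sum_abs _ _) ?_
          exact le_of_eq (Finset.sum_congr rfl (fun i _ => habs_sub i))
        have hea : e ≤ (1 - a) * P s := by
          rw [hedef, hPdef, Finset.mul_sum]
          refine Finset.sum_le_sum (fun i _ => ?_)
          exact mul_le_mul_of_nonneg_right (heps i) (hpi i).le
        have hmain := anal a (P s) (Q s) e ha0 ha1.le hPpos hQP hea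
        refine le_trans hmain (le_of_eq ?_)
        rw [hedef, Finset.sum_mul, Finset.mul_sum, ← Finset.sum_add_distrib]
        exact Finset.sum_congr rfl (fun i _ => by ring)
    have step2 : ∀ s, ∑ i ∈ T s, eps i * (pi i * |Real.log (P s)| + (2 / a) * pi i)
        ≤ ∑ i ∈ T s, eps i * (1 + 2 / a) := by
      intro s
      refine Finset.sum_le_sum (fun i hi => ?_)
      have hPpos : 0 < P s := Finset.sum_pos (fun j _ => hpi j) ⟨i, hi⟩
      have hpile : pi i ≤ P s := Finset.single_le_sum (fun j _ => (hpi j).le) hi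
      have h1 : pi i * |Real.log (P s)| ≤ 1 :=
        mul_abs_log_le_one' (pi i) (P s) (hpi i) hpile (hP1 s)
      have h2 : (2 / a) * pi i ≤ 2 / a := by
        have : pi i ≤ 1 := le_trans hpile (hP1 s)
        nlinarith [div_pos (by norm_num : (0:ℝ) < 2) ha0]
      exact mul_le_mul_of_nonneg_left (by linarith) (heps0 i)
    have hsum_fib : ∑ s, ∑ i ∈ T s, eps i * (1 + 2 / a)
        = (1 + 2 / a) * ∑ i, eps i := by
      rw [hT]
      rw [Finset.sum_fiberwise (g := f) (f := fun i => eps i * (1 + 2 / a))]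
      rw [← Finset.sum_mul]
      ring
    have keysum : |Hfin Q - Hfin P| ≤ (1 + 2 / a) * ∑ i, eps i := by
      unfold Hfin
      rw [← Finset.sum_sub_distrib]
      refine le_trans (Finset.abs_sum_le_sum_abs _ _) ?_
      rw [← hsum_fib]
      exact Finset.sum_le_sum (fun s _ => le_trans (hfiber s) (step2 s))
    have hepsnn : 0 ≤ ∑ i, eps i := Finset.sum_nonneg (fun i _ => heps0 i)
    have hconst : (1 + 2 / a) ≤ Real.log (Fintype.card S) * A := by
      rw [hA]
      rw [mul_div_assoc', le_div_iff₀ hlog2]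
      have h2a : 0 < 1 + 2 / a := by positivity
      nlinarith
    calc |Hfin Q - Hfin P| ≤ (1 + 2 / a) * ∑ i, eps i := keysum
      _ ≤ (Real.log (Fintype.card S) * A) * ∑ i, eps i :=
          mul_le_mul_of_nonneg_right hconst hepsnn
      _ = Real.log (Fintype.card S) * A * ∑ i, eps i := by ring
end
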